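/- For a > √2 and c satisfying 1 - 1/c² ≥ 1/√2 and e^{(a²-1)c²/2} ≥ Δ, the ratio of Gaussian tails satisfies N(c)/N(ac) ≥ Δ, where N is the standard normal tail. -/

import Mathlib

/-!
With φ the density and N the tail, integrating `x φ(y) ≤ y φ(y)` and `(1 - 3/y⁴) φ(y) ≤ φ(y)` over
`(x, ∞)`, where `y φ(y)` and `(1 - 3/y⁴) φ(y)` have the explicit antiderivatives `-φ(y)` and
`-φ(y) (1/y - 1/y³)`, gives the Mills-ratio bounds `φ(x) (1/x - 1/x³) ≤ N(x) ≤ φ(x) / x`. Hence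
`N(c) / N(ac) ≥ φ(c) / φ(ac) · a (1 - 1/c²) = exp((a² - 1) c² / 2) · a (1 - 1/c²)`, and the last
factor is at least `√2 · (1/√2) = 1`.
-/

open Real MeasureTheory

/-- The standard normal density. -/
noncomputable def stdNormalPDF (x : ℝ) : ℝ :=
  (Real.sqrt (2 * Real.pi))⁻¹ * Real.exp (-x ^ 2 / 2)

/-- The upper tail of the standard normal distribution. -/
noncomputable def stdNormalTail (x : ℝ) : ℝ :=
  ∫ y in Set.Ici x, stdNormalPDF y

open Filter Topology Set

lemma stdNormalPDF_pos (x : ℝ) : 0 < stdNormalPDF x := by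
  unfold stdNormalPDF; positivity

lemma stdNormalPDF_div_stdNormalPDF (x y : ℝ) :
    stdNormalPDF x / stdNormalPDF y = exp ((y ^ 2 - x ^ 2) / 2) := by
  rw [stdNormalPDF, stdNormalPDF, mul_div_mul_left _ _ (by positivity), ← exp_sub]
  ring_nf

lemma hasDerivAt_stdNormalPDF (x : ℝ) : HasDerivAt stdNormalPDF (-x * stdNormalPDF x) x := by
  have h : HasDerivAt (fun t : ℝ => -t ^ 2 / 2) (-x) x :=
    ((hasDerivAt_pow 2 x).neg.div_const 2).congr_deriv (by push_cast; ring)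
  exact (h.exp.const_mul _).congr_deriv (by simp only [stdNormalPDF]; ring)

lemma continuous_stdNormalPDF : Continuous stdNormalPDF :=
  continuous_iff_continuousAt.2 fun x => (hasDerivAt_stdNormalPDF x).continuousAt

lemma integrable_stdNormalPDF : Integrable stdNormalPDF := by
  convert (integrable_exp_neg_mul_sq (by norm_num : (0:ℝ) < 1 / 2)).const_mul
    (Real.sqrt (2 * Real.pi))⁻¹ using 2 with y
  rw [stdNormalPDF]; ring_nf

lemma integrable_mul_stdNormalPDF : Integrable fun x => x * stdNormalPDF x := by
  convert (integrable_mul_exp_neg_mul_sq (by norm_num : (0:ℝ) < 1 / 2)).const_mul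
    (Real.sqrt (2 * Real.pi))⁻¹ using 2 with y
  rw [stdNormalPDF]; ring_nf

lemma tendsto_stdNormalPDF_atTop : Tendsto stdNormalPDF atTop (𝓝 0) := by
  have h : Tendsto (fun y : ℝ => -y ^ 2 / 2) atTop atBot := by
    simp_rw [neg_div]
    exact tendsto_neg_atTop_atBot.comp ((tendsto_pow_atTop two_ne_zero).atTop_div_const two_pos)
  have := (tendsto_exp_atBot.comp h).const_mul (Real.sqrt (2 * Real.pi))⁻¹
  rwa [mul_zero] at this

lemma stdNormalTail_eq_integral_Ioi (x : ℝ) :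
    stdNormalTail x = ∫ y in Ioi x, stdNormalPDF y :=
  integral_Ici_eq_integral_Ioi

lemma stdNormalTail_pos (x : ℝ) : 0 < stdNormalTail x := by
  rw [stdNormalTail_eq_integral_Ioi, setIntegral_pos_iff_support_of_nonneg_ae
    (ae_of_all _ fun y => (stdNormalPDF_pos y).le) integrable_stdNormalPDF.integrableOn,
    Function.support_eq_univ fun y => (stdNormalPDF_pos y).ne', univ_inter]
  simp

lemma integral_Ioi_mul_stdNormalPDF (x : ℝ) :
    ∫ y in Ioi x, y * stdNormalPDF y = stdNormalPDF x := by
  rw [integral_Ioi_of_hasDerivAt_of_tendsto' (f := fun y => -stdNormalPDF y)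
    (fun y _ => (hasDerivAt_stdNormalPDF y).neg.congr_deriv (by ring))
    integrable_mul_stdNormalPDF.integrableOn (by simpa using tendsto_stdNormalPDF_atTop.neg)]
  ring

lemma stdNormalTail_le_stdNormalPDF_div {x : ℝ} (hx : 0 < x) :
    stdNormalTail x ≤ stdNormalPDF x / x := by
  rw [stdNormalTail_eq_integral_Ioi, le_div_iff₀ hx, ← integral_Ioi_mul_stdNormalPDF,
    ← integral_mul_const]
  refine setIntegral_mono_on (integrable_stdNormalPDF.integrableOn.mul_const x)
    integrable_mul_stdNormalPDF.integrableOn measurableSet_Ioi fun y hy => ?_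
  rw [mul_comm y]
  exact mul_le_mul_of_nonneg_left (le_of_lt hy) (stdNormalPDF_pos y).le

lemma hasDerivAt_stdNormalPDF_mul_one_div_sub {x : ℝ} (hx : x ≠ 0) :
    HasDerivAt (fun y => stdNormalPDF y * (1 / y - 1 / y ^ 3))
      (-((1 - 3 / x ^ 4) * stdNormalPDF x)) x := by
  have h₁ : HasDerivAt (fun y : ℝ => 1 / y) (-1 / x ^ 2) x := by
    simpa [one_div, neg_div] using hasDerivAt_inv hx
  have h₃ : HasDerivAt (fun y : ℝ => 1 / y ^ 3) (-3 / x ^ 4) x := by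
    have := (hasDerivAt_pow 3 x).inv (pow_ne_zero 3 hx)
    refine (this.congr_deriv ?_).congr_of_eventuallyEq (Eventually.of_forall fun y => one_div _)
    field_simp; push_cast; ring
  refine ((hasDerivAt_stdNormalPDF x).mul (h₁.sub h₃)).congr_deriv ?_
  simp only [Pi.sub_apply]
  field_simp
  ring

lemma integrableOn_one_sub_three_div_pow_four_mul_stdNormalPDF {x : ℝ} (hx : 0 < x) :
    IntegrableOn (fun y => (1 - 3 / y ^ 4) * stdNormalPDF y) (Ioi x) := by
  refine (integrable_stdNormalPDF.integrableOn.const_mul (1 + 3 / x ^ 4)).mono'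
    ((continuousOn_const.sub (continuousOn_const.div (continuousOn_id.pow 4) fun y hy =>
      pow_ne_zero 4 (hx.trans hy).ne')).mul
      continuous_stdNormalPDF.continuousOn |>.aestronglyMeasurable measurableSet_Ioi) ?_
  refine (ae_restrict_iff' measurableSet_Ioi).2 (ae_of_all _ fun y hxy => ?_)
  have hy : 0 < y := hx.trans hxy
  rw [norm_mul, Real.norm_of_nonneg (stdNormalPDF_pos y).le]
  refine mul_le_mul_of_nonneg_right ?_ (stdNormalPDF_pos y).le
  calc ‖1 - 3 / y ^ 4‖ ≤ 1 + 3 / y ^ 4 := by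
        rw [Real.norm_eq_abs, abs_le]; constructor <;> linarith [show 0 < 3 / y ^ 4 by positivity]
    _ ≤ 1 + 3 / x ^ 4 := by gcongr; exact le_of_lt hxy

lemma integral_Ioi_one_sub_three_div_pow_four_mul_stdNormalPDF {x : ℝ} (hx : 0 < x) :
    ∫ y in Ioi x, (1 - 3 / y ^ 4) * stdNormalPDF y = stdNormalPDF x * (1 / x - 1 / x ^ 3) := by
  have hlim : Tendsto (fun y : ℝ => 1 / y - 1 / y ^ 3) atTop (𝓝 0) := by
    simpa using (tendsto_inv_atTop_zero (𝕜 := ℝ)).sub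
      (tendsto_inv_atTop_zero.comp (tendsto_pow_atTop (n := 3) three_ne_zero))
  rw [integral_Ioi_of_hasDerivAt_of_tendsto'
    (f := fun y => -(stdNormalPDF y * (1 / y - 1 / y ^ 3)))
    (fun y hy => (hasDerivAt_stdNormalPDF_mul_one_div_sub
      (hx.trans_le hy).ne').neg.congr_deriv (neg_neg _))
    (integrableOn_one_sub_three_div_pow_four_mul_stdNormalPDF hx)
    (by simpa using (tendsto_stdNormalPDF_atTop.mul hlim).neg)]
  ring

lemma stdNormalPDF_mul_one_div_sub_le_stdNormalTail {x : ℝ} (hx : 0 < x) :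
    stdNormalPDF x * (1 / x - 1 / x ^ 3) ≤ stdNormalTail x := by
  rw [stdNormalTail_eq_integral_Ioi, ← integral_Ioi_one_sub_three_div_pow_four_mul_stdNormalPDF hx]
  refine setIntegral_mono_on (integrableOn_one_sub_three_div_pow_four_mul_stdNormalPDF hx)
    integrable_stdNormalPDF.integrableOn measurableSet_Ioi fun y hy => ?_
  have : 0 < 3 / y ^ 4 := by have := hx.trans hy; positivity
  nlinarith [stdNormalPDF_pos y]

lemma stdNormalPDF_div_mul_le_stdNormalTail_div {x y : ℝ} (hx : 0 < x) (hy : 0 < y) :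
    stdNormalPDF x / stdNormalPDF y * (y * (1 / x - 1 / x ^ 3)) ≤
      stdNormalTail x / stdNormalTail y := by
  have hφ := (stdNormalPDF_pos y).ne'
  calc stdNormalPDF x / stdNormalPDF y * (y * (1 / x - 1 / x ^ 3))
      = stdNormalPDF x * (1 / x - 1 / x ^ 3) / (stdNormalPDF y / y) := by
        field_simp
    _ ≤ stdNormalTail x / stdNormalTail y :=
        div_le_div₀ (stdNormalTail_pos x).le
          (stdNormalPDF_mul_one_div_sub_le_stdNormalTail hx) (stdNormalTail_pos y)
          (stdNormalTail_le_stdNormalPDF_div hy)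

theorem tail_ratio_ge_general (a c Δ : ℝ) (ha : Real.sqrt 2 < a) (hc : 0 < c)
    (hc2 : 1 / Real.sqrt 2 ≤ 1 - 1 / c ^ 2)
    (hΔ2 : Δ ≤ Real.exp ((a ^ 2 - 1) * c ^ 2 / 2)) :
    Δ ≤ stdNormalTail c / stdNormalTail (a * c) := by
  have ha0 : 0 < a := (sqrt_nonneg 2).trans_lt ha
  have hfactor : 1 ≤ a * c * (1 / c - 1 / c ^ 3) :=
    calc 1 = √2 * (1 / √2) := by field_simp
      _ ≤ a * (1 - 1 / c ^ 2) := mul_le_mul ha.le hc2 (by positivity) ha0.le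
      _ = a * c * (1 / c - 1 / c ^ 3) := by field_simp
  calc Δ ≤ exp ((a ^ 2 - 1) * c ^ 2 / 2) := hΔ2
    _ ≤ exp ((a ^ 2 - 1) * c ^ 2 / 2) * (a * c * (1 / c - 1 / c ^ 3)) :=
        le_mul_of_one_le_right (exp_pos _).le hfactor
    _ = stdNormalPDF c / stdNormalPDF (a * c) * (a * c * (1 / c - 1 / c ^ 3)) := by
        rw [stdNormalPDF_div_stdNormalPDF]; ring_nf
    _ ≤ stdNormalTail c / stdNormalTail (a * c) :=
        stdNormalPDF_div_mul_le_stdNormalTail_div hc (mul_pos ha0 hc)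

theorem tail_ratio_ge (a c Δ : ℝ) (ha : Real.sqrt 2 < a) (hc : 0 < c) (hΔ : 1 ≤ Δ)
    (hc2 : 1 / Real.sqrt 2 ≤ 1 - 1 / c ^ 2)
    (hΔ2 : Δ ≤ Real.exp ((a ^ 2 - 1) * c ^ 2 / 2)) :
    Δ ≤ stdNormalTail c / stdNormalTail (a * c) :=
  tail_ratio_ge_general a c Δ ha hc hc2 hΔ2
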